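/- The group G₉ = ⟨x, y | x y x y⁻¹ x⁻¹ = y x⁻¹ y x y⁻¹, x⁻¹ y⁻¹ x y x = y⁻¹ x⁻¹ y x y⟩ is left-orderable. -/

import Mathlib

universe u

/-- A group is left-orderable if it admits a left-invariant strict total order. -/
def IsLeftOrderable (G : Type u) [Group G] : Prop :=
  ∃ r : G → G → Prop, IsStrictTotalOrder G r ∧ ∀ h a b : G, r a b → r (h * a) (h * b)

/-- The relators of the virtual knot group
`G₉ = ⟨x, y | x y x y⁻¹ x⁻¹ = y x⁻¹ y x y⁻¹, x⁻¹ y⁻¹ x y x = y⁻¹ x⁻¹ y x y⟩`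
(generators: `x = of 0`, `y = of 1`). -/
def G9Rels : Set (FreeGroup (Fin 2)) :=
  {FreeGroup.of 0 * FreeGroup.of 1 * FreeGroup.of 0 * (FreeGroup.of 1)⁻¹ * (FreeGroup.of 0)⁻¹ *
     (FreeGroup.of 1 * (FreeGroup.of 0)⁻¹ * FreeGroup.of 1 * FreeGroup.of 0 *
       (FreeGroup.of 1)⁻¹)⁻¹,
   (FreeGroup.of 0)⁻¹ * (FreeGroup.of 1)⁻¹ * FreeGroup.of 0 * FreeGroup.of 1 * FreeGroup.of 0 *
     ((FreeGroup.of 1)⁻¹ * (FreeGroup.of 0)⁻¹ * FreeGroup.of 1 * FreeGroup.of 0 *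
       FreeGroup.of 1)⁻¹}

/-!
Sending `x ↦ (0, 1)` and `y ↦ (-1, 1)` defines a homomorphism from `G₉` to `ℂ ⋊ ℤ`, where `n ∈ ℤ`
acts by multiplication by `τⁿ`, `τ = 1 + i`. With `a = x y⁻¹`, the two relations say exactly that
`a` commutes with `x a x⁻¹` and `x² a x⁻² = (x a x⁻¹)² a⁻²`; in `ℂ ⋊ ℤ` the latter is `τ² = 2τ - 2`.
The same identities show that `A₀ = ⟨a, x a x⁻¹⟩` is abelian and stable under conjugation by `x`,
so `G₉ = (⋃ₙ x⁻ⁿ A₀ xⁿ) ⟨x⟩`. The homomorphism is injective on `A₀` because `1` and `τ` are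
linearly independent over `ℤ`, hence on the whole union, and it sends `x` to an element of infinite
order modulo `ℂ`, so it is injective. Finally `ℂ ⋊ ℤ` is left-orderable as an
extension of `ℤ` by `ℂ` (ordered lexicographically), and left-orderability passes to subgroups.
-/

open Function

section PositiveCone

variable {G : Type*} [Group G]

structure IsPositiveCone (P : Set G) : Prop where
  mul_mem {a b : G} : a ∈ P → b ∈ P → a * b ∈ P
  one_notMem : (1 : G) ∉ P
  mem_or_eq_one_or_inv_mem (g : G) : g ∈ P ∨ g = 1 ∨ g⁻¹ ∈ P

theorem isLeftOrderable_iff_exists_isPositiveCone :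
    IsLeftOrderable G ↔ ∃ P : Set G, IsPositiveCone P := by
  constructor
  · rintro ⟨r, hr, hinv⟩
    refine ⟨{g | r 1 g}, ⟨fun {a b} ha hb => ?_, irrefl_of r 1, fun g => ?_⟩⟩
    · exact _root_.trans_of r ha (by simpa using hinv a 1 b hb)
    · rcases trichotomous_of r 1 g with h | h | h
      · exact .inl h
      · exact .inr (.inl h.symm)
      · exact .inr (.inr (by simpa using hinv g⁻¹ g 1 h))
  · rintro ⟨P, hP⟩
    refine ⟨fun a b => a⁻¹ * b ∈ P, { trichotomous := ?_, irrefl := ?_, trans := ?_ }, ?_⟩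
    · intro a b hab hba
      rcases hP.mem_or_eq_one_or_inv_mem (a⁻¹ * b) with h | h | h
      · exact absurd h hab
      · exact inv_mul_eq_one.mp h
      · exact absurd (by simpa using h) hba
    · intro a
      simpa using hP.one_notMem
    · intro a b c hab hbc
      simpa [mul_assoc] using hP.mul_mem hab hbc
    · intro h a b hab
      simpa [mul_assoc] using hab

theorem IsPositiveCone.preimage {H : Type*} [Group H] {P : Set H} (hP : IsPositiveCone P)
    {f : G →* H} (hf : Injective f) : IsPositiveCone (f ⁻¹' P) where
  mul_mem ha hb := by simpa using hP.mul_mem ha hb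
  one_notMem := by simpa using hP.one_notMem
  mem_or_eq_one_or_inv_mem g := by
    simpa [← map_inv, (injective_iff_map_eq_one' f).mp hf] using hP.mem_or_eq_one_or_inv_mem (f g)

theorem IsPositiveCone.preimage_union_image_val {Q : Type*} [Group Q] {π : G →* Q} {P : Set Q}
    (hP : IsPositiveCone P) {PK : Set π.ker} (hPK : IsPositiveCone PK) :
    IsPositiveCone (π ⁻¹' P ∪ Subtype.val '' PK) where
  mul_mem := by
    rintro a b (ha | ⟨a, ha, rfl⟩) (hb | ⟨b, hb, rfl⟩)
    · exact .inl (by simpa using hP.mul_mem ha hb)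
    · exact .inl (by simpa [π.mem_ker.mp b.2] using ha)
    · exact .inl (by simpa [π.mem_ker.mp a.2] using hb)
    · exact .inr ⟨a * b, hPK.mul_mem ha hb, rfl⟩
  one_notMem := by
    rintro (h | ⟨a, ha, h⟩)
    · exact hP.one_notMem (by simpa using h)
    · exact hPK.one_notMem ((Subtype.ext h : a = 1) ▸ ha)
  mem_or_eq_one_or_inv_mem g := by
    rcases hP.mem_or_eq_one_or_inv_mem (π g) with h | h | h
    · exact .inl (.inl h)
    · rcases hPK.mem_or_eq_one_or_inv_mem ⟨g, h⟩ with h' | h' | h'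
      · exact .inl (.inr ⟨_, h', rfl⟩)
      · exact .inr (.inl (congrArg Subtype.val h'))
      · exact .inr (.inr (.inr ⟨_, h', rfl⟩))
    · exact .inr (.inr (.inl (by simpa using h)))

end PositiveCone

namespace IsLeftOrderable

variable {G H : Type*} [Group G] [Group H]

theorem of_injective (hH : IsLeftOrderable H) {f : G →* H} (hf : Injective f) :
    IsLeftOrderable G := by
  obtain ⟨P, hP⟩ := isLeftOrderable_iff_exists_isPositiveCone.mp hH
  exact isLeftOrderable_iff_exists_isPositiveCone.mpr ⟨_, hP.preimage hf⟩

theorem of_ker (π : G →* H) (hK : IsLeftOrderable π.ker) (hH : IsLeftOrderable H) :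
    IsLeftOrderable G := by
  obtain ⟨P, hP⟩ := isLeftOrderable_iff_exists_isPositiveCone.mp hH
  obtain ⟨PK, hPK⟩ := isLeftOrderable_iff_exists_isPositiveCone.mp hK
  exact isLeftOrderable_iff_exists_isPositiveCone.mpr ⟨_, hP.preimage_union_image_val hPK⟩

theorem of_linearOrder [LinearOrder G] [MulLeftStrictMono G] : IsLeftOrderable G :=
  ⟨(· < ·), inferInstance, fun h _ _ hab => mul_lt_mul_right hab h⟩

end IsLeftOrderable

theorem SemidirectProduct.isLeftOrderable {N K : Type*} [Group N] [Group K] {φ : K →* MulAut N}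
    (hN : IsLeftOrderable N) (hK : IsLeftOrderable K) : IsLeftOrderable (N ⋊[φ] K) := by
  let e : N ≃* (rightHom : N ⋊[φ] K →* K).ker :=
    (MonoidHom.ofInjective inl_injective).trans (MulEquiv.subgroupCongr range_inl_eq_ker_rightHom)
  exact .of_ker rightHom (hN.of_injective (f := e.symm.toMonoidHom) e.symm.injective) hK

open Filter in
theorem Filter.eventually_atTop_add_one_iff_nat {p : ℕ → Prop} :
    (∀ᶠ n in atTop, p (n + 1)) ↔ ∀ᶠ n in atTop, p n := by
  simpa [tendsto_principal] using tendsto_add_atTop_iff_nat (f := id) (l := 𝓟 {n | p n}) 1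

namespace Subgroup

variable {G : Type*} [Group G]

-- `⋃ₙ x⁻ⁿ A xⁿ`, an increasing union as soon as `x A x⁻¹ ≤ A`.
open Filter in
def ascendingUnion (A : Subgroup G) (x : G) : Subgroup G where
  carrier := {g | ∀ᶠ n : ℕ in atTop, MulAut.conj (x ^ n) g ∈ A}
  mul_mem' ha hb := (ha.and hb).mono fun _ h => by simpa using A.mul_mem h.1 h.2
  one_mem' := .of_forall fun _ => by simp
  inv_mem' ha := ha.mono fun _ h => by simpa using A.inv_mem h

variable {A : Subgroup G} {x : G}

theorem le_ascendingUnion (hA : A.map (MulAut.conj x).toMonoidHom ≤ A) :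
    A ≤ A.ascendingUnion x := by
  intro g hg
  refine Filter.Eventually.of_forall fun n => ?_
  induction n with
  | zero => simpa using hg
  | succ n ih =>
    rw [pow_succ', map_mul, MulAut.mul_apply]
    exact hA ⟨_, ih, rfl⟩

theorem mem_normalizer_ascendingUnion : x ∈ normalizer (A.ascendingUnion x : Set G) := by
  refine mem_normalizer_iff.mpr fun g => ?_
  change _ ↔ ∀ᶠ n : ℕ in Filter.atTop, MulAut.conj (x ^ n) (x * g * x⁻¹) ∈ A
  simp_rw [← MulAut.conj_apply, ← MulAut.mul_apply, ← map_mul, ← pow_succ]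
  exact Filter.eventually_atTop_add_one_iff_nat.symm

theorem ascendingUnion_le_of_normal {N : Subgroup G} [N.Normal] (h : A ≤ N) :
    A.ascendingUnion x ≤ N := by
  intro g hg
  obtain ⟨n, hn⟩ := Filter.Eventually.exists hg
  convert Normal.conj_mem inferInstance _ (h hn) (x ^ n)⁻¹ using 1
  simp only [MulAut.conj_apply]
  group

theorem disjoint_ascendingUnion_of_normal {N : Subgroup G} [N.Normal] (h : Disjoint A N) :
    Disjoint (A.ascendingUnion x) N := by
  refine disjoint_def.mpr fun {g} hgA hgN => ?_
  obtain ⟨n, hn⟩ := Filter.Eventually.exists hgA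
  have : MulAut.conj (x ^ n) g ∈ N := Normal.conj_mem inferInstance _ hgN _
  simpa using disjoint_def.mp h hn this

end Subgroup

theorem MonoidHom.injective_of_sup_zpowers_eq_top {G H Q : Type*} [Group G] [Group H] [Group Q]
    {f : G →* H} {π : H →* Q} {K : Subgroup G} {x : G}
    (hxK : x ∈ Subgroup.normalizer (K : Set G)) (htop : K ⊔ Subgroup.zpowers x = ⊤)
    (hKf : Disjoint K f.ker) (hKπ : K ≤ (π.comp f).ker)
    (hx : ¬IsOfFinOrder (π (f x))) : Injective f := by
  refine (injective_iff_map_eq_one f).mpr fun g hg => ?_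
  have hg' : g ∈ ((K ⊔ Subgroup.zpowers x : Subgroup G) : Set G) := by simp [htop]
  rw [Subgroup.coe_mul_of_right_le_normalizer_left _ _ (Subgroup.zpowers_le.mpr hxK)] at hg'
  obtain ⟨k, hk, _, ⟨d, rfl⟩, rfl⟩ := hg'
  have hd : d = 0 := by
    by_contra hd
    refine hx (isOfFinOrder_iff_zpow_eq_one.mpr ⟨d, hd, ?_⟩)
    have hπk : π (f k) = 1 := hKπ hk
    simpa [hπk] using congrArg π hg
  have hk1 : k = 1 := Subgroup.disjoint_def.mp hKf hk (by simpa [hd] using hg)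
  simp [hd, hk1]

theorem Commute.exists_zpow_mul_zpow_of_mem_sup {G : Type*} [Group G] {a b g : G}
    (h : Commute a b) (hg : g ∈ Subgroup.zpowers a ⊔ Subgroup.zpowers b) :
    ∃ p q : ℤ, a ^ p * b ^ q = g := by
  rw [← Subgroup.range_zpowersHom, ← Subgroup.range_zpowersHom,
    ← MonoidHom.noncommCoprod_range _ _ fun _ _ => h.zpow_zpow _ _] at hg
  obtain ⟨⟨m, n⟩, rfl⟩ := hg
  exact ⟨m.toAdd, n.toAdd, rfl⟩

def mulUnitZPow {R : Type*} [Ring R] (u : Rˣ) : Multiplicative ℤ →* MulAut (Multiplicative R) :=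
  (MulAutMultiplicative R).symm.toMonoidHom.comp (AddAut.mulLeft.comp (zpowersHom Rˣ u))

theorem mulUnitZPow_apply {R : Type*} [Ring R] (u : Rˣ) (n : Multiplicative ℤ)
    (a : Multiplicative R) :
    mulUnitZPow u n a = .ofAdd (↑(u ^ n.toAdd) * a.toAdd) :=
  rfl

theorem isLeftOrderable_multiplicative_complex : IsLeftOrderable (Multiplicative ℂ) :=
  IsLeftOrderable.of_linearOrder (G := Multiplicative (ℝ ×ₗ ℝ)) |>.of_injective
    (f := (AddEquiv.toMultiplicative
      (Complex.equivRealProdAddHom.trans (toLexAddEquiv _))).toMonoidHom) (MulEquiv.injective _)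

theorem G9Rels_lift_eq_one_iff {H : Type*} [Group H] (x a : H) :
    (∀ r ∈ G9Rels, FreeGroup.lift ![x, a⁻¹ * x] r = 1) ↔
      Commute a (MulAut.conj x a) ∧
        MulAut.conj x (MulAut.conj x a) = MulAut.conj x a ^ 2 * (a ^ 2)⁻¹ := by
  set b := MulAut.conj x a with hb
  set c := MulAut.conj x b with hc
  simp only [MulAut.conj_apply] at hb hc
  simp only [G9Rels, Set.mem_insert_iff, Set.mem_singleton_iff, forall_eq_or_imp, forall_eq]
  refine (Iff.and (c := c = b * a⁻¹ * a⁻¹ * b) (d := c = b * a⁻¹ * b * a⁻¹) ?_ ?_).trans ?_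
  · rw [← mul_inv_eq_one (a := c), ← conj_eq_one_iff (a := b⁻¹) (b := c * _)]
    refine Eq.congr_left ?_
    simp [hb, hc]
    group
  · rw [← mul_inv_eq_one (a := c), ← conj_eq_one_iff (a := (x ^ 2)⁻¹ * (a * b⁻¹)) (b := c * _)]
    refine Eq.congr_left ?_
    simp [hb, hc]
    group
  constructor
  · rintro ⟨h₁, h₂⟩
    have hab : Commute a⁻¹ b :=
      mul_left_cancel (a := b * a⁻¹) (by simpa [mul_assoc] using h₁.symm.trans h₂)
    refine ⟨Commute.inv_left_iff.mp hab, ?_⟩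
    rw [h₂, sq, sq, mul_inv_rev, ← mul_assoc, mul_assoc b a⁻¹ b, hab.eq]
    group
  · rintro ⟨hab, hcab⟩
    have hab' := hab.inv_left
    constructor <;> simp only [hcab, sq, mul_inv_rev, mul_assoc, hab'.eq, hab'.left_comm]

noncomputable section

namespace G9

open Subgroup SemidirectProduct

def τ : ℂˣ := Units.mk0 (1 + Complex.I) (by simp [Complex.ext_iff])

theorem τ_sq : (τ : ℂ) ^ 2 = 2 * τ - 2 := by
  simp [τ, Complex.ext_iff, sq]
  norm_num

theorem eq_zero_of_add_mul_τ_eq_zero {p q : ℤ} (h : (p : ℂ) + q * τ = 0) : p = 0 ∧ q = 0 := by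
  have hre := congrArg Complex.re h
  have him := congrArg Complex.im h
  simp [τ] at hre him
  have : p + q = 0 := by exact_mod_cast hre
  omega

abbrev Target := Multiplicative ℂ ⋊[mulUnitZPow τ] Multiplicative ℤ

theorem conj_inr_one_inl (z : ℂ) :
    MulAut.conj (inr (.ofAdd 1) : Target) (inl (.ofAdd z)) = inl (.ofAdd (τ * z)) := by
  rw [MulAut.conj_apply, ← map_inv inr, ← inl_aut, mulUnitZPow_apply]
  simp

def x : PresentedGroup G9Rels := PresentedGroup.of 0

def a : PresentedGroup G9Rels := x * (PresentedGroup.of 1)⁻¹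

theorem commute_conj_and_conj_conj_eq :
    Commute a (MulAut.conj x a) ∧
      MulAut.conj x (MulAut.conj x a) = MulAut.conj x a ^ 2 * (a ^ 2)⁻¹ := by
  refine (G9Rels_lift_eq_one_iff x a).mp fun r hr => ?_
  have : FreeGroup.lift ![x, a⁻¹ * x] = PresentedGroup.mk G9Rels :=
    FreeGroup.ext_hom _ _ fun i => by fin_cases i <;> simp [x, a] <;> rfl
  rw [this]
  exact PresentedGroup.one_of_mem hr

def A₀ : Subgroup (PresentedGroup G9Rels) := zpowers a ⊔ zpowers (MulAut.conj x a)

theorem map_conj_A₀_le : A₀.map (MulAut.conj x).toMonoidHom ≤ A₀ := by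
  rw [A₀, Subgroup.map_sup, MonoidHom.map_zpowers, MonoidHom.map_zpowers, sup_le_iff, zpowers_le,
    zpowers_le, MulEquiv.coe_toMonoidHom, commute_conj_and_conj_conj_eq.2]
  refine ⟨mem_sup_right (mem_zpowers _), mul_mem ?_ (inv_mem ?_)⟩
  · exact pow_mem (mem_sup_right (mem_zpowers _)) _
  · exact pow_mem (mem_sup_left (mem_zpowers _)) _

theorem ascendingUnion_sup_zpowers_eq_top : A₀.ascendingUnion x ⊔ zpowers x = ⊤ := by
  rw [eq_top_iff, ← PresentedGroup.closure_range_of, closure_le]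
  rintro _ ⟨i, rfl⟩
  fin_cases i
  · exact mem_sup_right (mem_zpowers x)
  · change PresentedGroup.of 1 ∈ _
    have ha : a ∈ A₀.ascendingUnion x :=
      le_ascendingUnion map_conj_A₀_le (mem_sup_left (mem_zpowers a))
    rw [show PresentedGroup.of 1 = a⁻¹ * x by simp [a, x]]
    exact mul_mem (mem_sup_left (inv_mem ha)) (mem_sup_right (mem_zpowers x))

def toTarget : PresentedGroup G9Rels →* Target := PresentedGroup.toGroup <|
  (G9Rels_lift_eq_one_iff (inr (.ofAdd 1)) (inl (.ofAdd 1))).mpr <| by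
    refine ⟨?_, ?_⟩ <;> simp only [conj_inr_one_inl]
    · exact (Commute.all _ _).map inl
    · rw [← map_pow inl, ← map_pow inl, ← map_inv inl, ← map_mul inl]
      congr 1
      apply Multiplicative.toAdd.injective
      simp only [toAdd_ofAdd, toAdd_mul, toAdd_pow, toAdd_inv, nsmul_eq_mul]
      linear_combination τ_sq

theorem toTarget_x : toTarget x = inr (.ofAdd 1) := by
  simp [toTarget, x, PresentedGroup.toGroup.of]

theorem toTarget_a : toTarget a = inl (.ofAdd 1) := by
  simp [toTarget, a, x, PresentedGroup.toGroup.of]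

theorem toTarget_conj_x_a : toTarget (MulAut.conj x a) = inl (.ofAdd (τ : ℂ)) := by
  simpa [toTarget_x, toTarget_a] using conj_inr_one_inl 1

theorem disjoint_A₀_ker : Disjoint A₀ toTarget.ker := by
  refine disjoint_def.mpr fun {g} hg hker => ?_
  obtain ⟨p, q, rfl⟩ := commute_conj_and_conj_conj_eq.1.exists_zpow_mul_zpow_of_mem_sup hg
  rw [MonoidHom.mem_ker, map_mul, map_zpow, map_zpow, toTarget_a, toTarget_conj_x_a,
    ← map_zpow inl, ← map_zpow inl, ← map_mul inl,
    (injective_iff_map_eq_one' inl).mp inl_injective] at hker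
  obtain ⟨rfl, rfl⟩ :=
    eq_zero_of_add_mul_τ_eq_zero (by simpa using congrArg Multiplicative.toAdd hker)
  simp

theorem A₀_le_ker_rightHom_comp : A₀ ≤ (rightHom.comp toTarget).ker := by
  rw [A₀, sup_le_iff, zpowers_le, zpowers_le]
  simp [toTarget_a]

theorem toTarget_injective : Injective toTarget :=
  toTarget.injective_of_sup_zpowers_eq_top mem_normalizer_ascendingUnion
    ascendingUnion_sup_zpowers_eq_top (disjoint_ascendingUnion_of_normal disjoint_A₀_ker)
    (ascendingUnion_le_of_normal A₀_le_ker_rightHom_comp)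
    (not_isOfFinOrder_of_isMulTorsionFree (by simp [toTarget_x]))

end G9

end

/-- The virtual knot group `G₉` is left-orderable. -/
theorem G9_leftOrderable : IsLeftOrderable (PresentedGroup G9Rels) :=
  (SemidirectProduct.isLeftOrderable isLeftOrderable_multiplicative_complex
    .of_linearOrder).of_injective G9.toTarget_injective
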